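/- Let k ≥ 2 be an integer, x ∈ ℚ, and z ∈ ℂ with Im(z) > 0. Then the absolutely convergent series over n ∈ ℤ satisfies ∑_{n ∈ ℤ} e(n·x)·(z+n)^{−k} = ((−2πi)^k/(k−1)!) · ∑_{r ∈ ℤ−x, r>0} r^{k−1}·e(r·z), where the sum on the right ranges over all positive real numbers r with r + x ∈ ℤ. -/

import Mathlib

open Complex

/-- `e(w) = exp(2πi·w)`. -/
noncomputable def eOf (w : ℂ) : ℂ := Complex.exp (2 * Real.pi * Complex.I * w)

namespace LipschitzAux

open MeasureTheory Set Filter Asymptotics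

lemma aux_norm (c : ℂ) (m : ℕ) (t : ℝ) (ht : 0 ≤ t) :
    ‖(t:ℂ)^m * Complex.exp (-(c*t))‖ = t ^ m * Real.exp (-c.re * t) := by
  rw [norm_mul, norm_pow, Complex.norm_exp]
  congr 1
  · simp [Complex.norm_real, _root_.abs_of_nonneg ht]
  · congr 1; simp [mul_comm]

lemma aux_integrableOn (c : ℂ) (hc : 0 < c.re) (n : ℕ) :
    IntegrableOn (fun t : ℝ => (t:ℂ)^n * Complex.exp (-(c*t))) (Ioi (0:ℝ)) := by
  have hg : IntegrableOn (fun t : ℝ => t ^ (n:ℝ) * Real.exp (-c.re * t ^ (1:ℝ))) (Ioi (0:ℝ)) :=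
    integrableOn_rpow_mul_exp_neg_mul_rpow
      (by exact_mod_cast neg_one_lt_zero.trans_le n.cast_nonneg) one_pos hc
  refine Integrable.mono' hg ?_ ?_
  · exact (Continuous.aestronglyMeasurable (by continuity)).restrict
  · rw [ae_restrict_iff' measurableSet_Ioi]
    filter_upwards with t ht
    rw [mem_Ioi] at ht
    rw [aux_norm c n t ht.le, Real.rpow_natCast, Real.rpow_one]

lemma aux_tendsto (c : ℂ) (hc : 0 < c.re) (m : ℕ) :
    Tendsto (fun t : ℝ => (t:ℂ)^m * Complex.exp (-(c*t))) atTop (nhds 0) := by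
  rw [tendsto_zero_iff_norm_tendsto_zero]
  have h := tendsto_rpow_mul_exp_neg_mul_atTop_nhds_zero m c.re hc
  apply h.congr'
  filter_upwards [eventually_ge_atTop (0:ℝ)] with t ht
  rw [aux_norm c m t ht, Real.rpow_natCast]

lemma aux_hasDerivAt_exp (c : ℂ) (w : ℂ) :
    HasDerivAt (fun w : ℂ => Complex.exp (-(c*w))) (Complex.exp (-(c*w)) * (-c)) w := by
  have h1 : HasDerivAt (fun w : ℂ => -(c*w)) (-c) w := by
    simpa [Pi.neg_def] using ((hasDerivAt_id w).const_mul c).neg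
  exact (Complex.hasDerivAt_exp _).comp w h1

lemma aux_integral (c : ℂ) (hc : 0 < c.re) (n : ℕ) :
    ∫ t in Ioi (0:ℝ), (t:ℂ)^n * Complex.exp (-(c*t)) = n.factorial / c^(n+1) := by
  have hcne : c ≠ 0 := by intro h; rw [h] at hc; simp at hc
  induction n with
  | zero =>
    have hderiv : ∀ t ∈ Ici (0:ℝ), HasDerivAt (fun t : ℝ => -c⁻¹ * Complex.exp (-(c*t)))
        ((t:ℂ)^0 * Complex.exp (-(c*t))) t := by
      intro t _
      have h := (((aux_hasDerivAt_exp c (t:ℂ)).const_mul (-c⁻¹))).comp_ofReal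
      convert h using 1
      field_simp
    have htend : Tendsto (fun t : ℝ => -c⁻¹ * Complex.exp (-(c*t))) atTop (nhds 0) := by
      have h := (aux_tendsto c hc 0).const_mul (-c⁻¹)
      simpa using h
    have key := integral_Ioi_of_hasDerivAt_of_tendsto' hderiv (aux_integrableOn c hc 0) htend
    rw [key]
    simp [hcne]
  | succ n ih =>
    have hderiv : ∀ t ∈ Ici (0:ℝ),
        HasDerivAt (fun t : ℝ => -c⁻¹ * (t:ℂ)^(n+1) * Complex.exp (-(c*t)))
        ((-c⁻¹ * (n+1)) * ((t:ℂ)^n * Complex.exp (-(c*t)))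
          + (t:ℂ)^(n+1) * Complex.exp (-(c*t))) t := by
      intro t _
      have h := (((hasDerivAt_pow (n+1) (t:ℂ)).const_mul (-c⁻¹)).mul
        (aux_hasDerivAt_exp c (t:ℂ))).comp_ofReal
      convert h using 1
      · rfl
      simp only [Nat.add_sub_cancel]
      push_cast
      field_simp
    have htend : Tendsto (fun t : ℝ => -c⁻¹ * (t:ℂ)^(n+1) * Complex.exp (-(c*t)))
        atTop (nhds 0) := by
      have h := (aux_tendsto c hc (n+1)).const_mul (-c⁻¹)
      simp only [mul_zero] at h
      exact h.congr (fun t => by ring)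
    have h1 := (aux_integrableOn c hc n).const_mul (-c⁻¹ * (n+1))
    have h2 := aux_integrableOn c hc (n+1)
    have key := integral_Ioi_of_hasDerivAt_of_tendsto' hderiv (h1.add h2) htend
    rw [integral_add h1 h2, integral_const_mul, ih] at key
    simp only [Complex.ofReal_zero, ne_eq, zero_pow (Nat.succ_ne_zero n), mul_zero, zero_mul,
      sub_zero, zero_sub, neg_zero] at key
    have h3 : (∫ t in Ioi (0:ℝ), (t:ℂ)^(n+1) * Complex.exp (-(c*t)))
        = -((-c⁻¹ * (n+1)) * ((n.factorial : ℂ) / c^(n+1))) :=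
      eq_neg_of_add_eq_zero_right (by linear_combination key)
    rw [h3, Nat.factorial_succ]
    push_cast
    field_simp
    ring

noncomputable def Gf (k : ℕ) (y : ℝ) (z : ℂ) : ℝ → ℂ := fun v =>
  ((max (v - y) 0 : ℝ) : ℂ)^(k-1) * Complex.exp (2 * Real.pi * I * z * ((max (v - y) 0 : ℝ) : ℂ))

lemma Gf_cont (k : ℕ) (y : ℝ) (z : ℂ) : Continuous (Gf k y z) := by
  unfold Gf; fun_prop

lemma Gf_norm (k : ℕ) (y : ℝ) (z : ℂ) (v : ℝ) :
    ‖Gf k y z v‖ = (max (v - y) 0)^(k-1) * Real.exp (-(2*Real.pi*z.im) * max (v - y) 0) := by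
  unfold Gf
  rw [norm_mul, norm_pow, Complex.norm_exp]
  have h0 : (0:ℝ) ≤ max (v - y) 0 := le_max_right _ _
  congr 2
  · rw [Complex.norm_real, Real.norm_eq_abs, _root_.abs_of_nonneg h0]
  · have : (2 * (Real.pi:ℂ) * I * z * ((max (v - y) 0 : ℝ) : ℂ)).re
        = -(2*Real.pi*z.im) * max (v - y) 0 := by
      simp [Complex.mul_re, Complex.mul_im]
    rw [this]

lemma cre (z : ℂ) (hz : 0 < z.im) (ξ : ℝ) : 0 < (2*(Real.pi:ℂ)*I*((ξ:ℂ) - z)).re := by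
  have : (2*(Real.pi:ℂ)*I*((ξ:ℂ) - z)).re = 2*Real.pi*z.im := by
    simp [Complex.mul_re, Complex.mul_im]
  rw [this]
  positivity

lemma fourier_Gf (k : ℕ) (hk : 2 ≤ k) (y : ℝ) (z : ℂ) (hz : 0 < z.im) (ξ : ℝ) :
    FourierTransform.fourier (Gf k y z) ξ
      = Complex.exp ((-2 * Real.pi * y * ξ : ℝ) * I)
          * ((k-1).factorial / (2*(Real.pi:ℂ)*I*((ξ:ℂ) - z))^k) := by
  set c : ℂ := 2*(Real.pi:ℂ)*I*((ξ:ℂ) - z) with hc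
  have hcre : 0 < c.re := cre z hz ξ
  rw [Real.fourier_real_eq_integral_exp_smul]
  simp only [smul_eq_mul]
  have step1 : (∫ v : ℝ, Complex.exp ((-2 * Real.pi * v * ξ : ℝ) * I) * Gf k y z v)
      = ∫ u : ℝ, Complex.exp ((-2 * Real.pi * (u + y) * ξ : ℝ) * I) * Gf k y z (u + y) := by
    rw [integral_add_right_eq_self
      (fun v : ℝ => Complex.exp ((-2 * Real.pi * v * ξ : ℝ) * I) * Gf k y z v) y]
  rw [step1]
  have step2 : (∫ u : ℝ, Complex.exp ((-2 * Real.pi * (u + y) * ξ : ℝ) * I) * Gf k y z (u + y))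
      = ∫ u in Ioi (0:ℝ), Complex.exp ((-2 * Real.pi * (u + y) * ξ : ℝ) * I) * Gf k y z (u + y) := by
    rw [setIntegral_eq_integral_of_forall_compl_eq_zero]
    intro u hu
    rw [mem_Ioi, not_lt] at hu
    have : max (u + y - y) 0 = 0 := by
      rw [max_eq_right]; linarith
    unfold Gf
    rw [this]
    simp [zero_pow (by omega : k - 1 ≠ 0)]
  rw [step2]
  have step3 : (∫ u in Ioi (0:ℝ), Complex.exp ((-2 * Real.pi * (u + y) * ξ : ℝ) * I) * Gf k y z (u + y))
      = ∫ u in Ioi (0:ℝ), Complex.exp ((-2 * Real.pi * y * ξ : ℝ) * I)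
          * ((u:ℂ)^(k-1) * Complex.exp (-(c*u))) := by
    refine setIntegral_congr_fun measurableSet_Ioi (fun u hu => ?_)
    rw [mem_Ioi] at hu
    have hm : max (u + y - y) 0 = u := by
      rw [max_eq_left]
      · ring
      · linarith
    unfold Gf
    rw [hm]
    have h1 : ∀ (p a b : ℂ), Complex.exp a * (p * Complex.exp b) = p * Complex.exp (a + b) := by
      intro p a b; rw [Complex.exp_add]; ring
    rw [h1, h1]
    congr 2
    simp only [hc]
    push_cast
    ring
  rw [step3, integral_const_mul, aux_integral c hcre (k-1)]
  have hkk : k - 1 + 1 = k := by omega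
  rw [hkk]

lemma abs_rpow_neg_two (v : ℝ) (hv : 0 < v) : |v| ^ (-2 : ℝ) = (v^2)⁻¹ := by
  rw [_root_.abs_of_pos hv, show (-2:ℝ) = -((2:ℕ):ℝ) by norm_num, Real.rpow_neg hv.le,
    Real.rpow_natCast]

lemma Gf_isBigO (k : ℕ) (hk : 2 ≤ k) (y : ℝ) (z : ℂ) (hz : 0 < z.im) :
    (Gf k y z) =O[cocompact ℝ] (fun v : ℝ => |v| ^ (-2 : ℝ)) := by
  rw [cocompact_eq_atBot_atTop, isBigO_sup]
  constructor
  · apply IsBigO.of_bound 1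
    filter_upwards [eventually_le_atBot (min y 0)] with v hv
    have h1 : max (v - y) 0 = 0 := max_eq_right (by
      have := min_le_left y 0; linarith [le_min_iff.mp hv |>.1])
    rw [Gf_norm, h1, zero_pow (by omega : k - 1 ≠ 0), zero_mul]
    positivity
  · have hb : 0 < 2*Real.pi*z.im := by positivity
    have hT : Tendsto (fun v : ℝ => v^2 * ‖Gf k y z v‖) atTop (nhds 0) := by
      have h0 : Tendsto (fun w : ℝ => w ^ ((k+1 : ℕ):ℝ) * Real.exp (-(2*Real.pi*z.im) * w))
          atTop (nhds 0) := tendsto_rpow_mul_exp_neg_mul_atTop_nhds_zero _ _ hb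
      have hsub : Tendsto (fun v : ℝ => v - y) atTop atTop := by
        simpa [sub_eq_add_neg] using tendsto_atTop_add_const_right atTop (-y) tendsto_id
      have h2 := (h0.comp hsub).const_mul (4:ℝ)
      rw [mul_zero] at h2
      apply squeeze_zero' ?pos ?bnd h2
      case pos => filter_upwards with v; positivity
      case bnd =>
        filter_upwards [eventually_ge_atTop (2*|y| + 1)] with v hv
        have hy1 : y ≤ |y| := le_abs_self y
        have hvy : v/2 ≤ v - y := by
          have : 0 ≤ |y| := abs_nonneg y
          linarith
        have hvy0 : (0:ℝ) < v - y := by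
          have : 0 ≤ |y| := abs_nonneg y
          linarith
        have hm : max (v - y) 0 = v - y := max_eq_left hvy0.le
        rw [Gf_norm, hm]
        simp only [Function.comp]
        rw [Real.rpow_natCast]
        have hE : (0:ℝ) ≤ Real.exp (-(2*Real.pi*z.im) * (v - y)) := (Real.exp_pos _).le
        have hpow : v^2 * (v-y)^(k-1) ≤ 4 * (v-y)^(k+1) := by
          have h4 : (v-y)^(k+1) = (v-y)^2 * (v-y)^(k-1) := by
            rw [← pow_add]; congr 1; omega
          have hv0 : (0:ℝ) < v := by have := abs_nonneg y; linarith
          have hv2 : v^2 ≤ 4*(v-y)^2 := by nlinarith [mul_self_nonneg (v - y - v/2)]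
          rw [h4]
          have := pow_nonneg hvy0.le (k-1)
          nlinarith
        calc v^2 * ((v-y)^(k-1) * Real.exp (-(2*Real.pi*z.im) * (v-y)))
            = (v^2 * (v-y)^(k-1)) * Real.exp (-(2*Real.pi*z.im) * (v-y)) := by ring
          _ ≤ (4 * (v-y)^(k+1)) * Real.exp (-(2*Real.pi*z.im) * (v-y)) :=
              mul_le_mul_of_nonneg_right hpow hE
          _ = 4 * ((v-y)^(k+1) * Real.exp (-(2*Real.pi*z.im) * (v-y))) := by ring
    apply IsBigO.of_bound 1
    have hev := hT.eventually (gt_mem_nhds one_pos)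
    filter_upwards [hev, eventually_ge_atTop (1:ℝ)] with v h1 h2
    have hv0 : (0:ℝ) < v := by linarith
    rw [Real.norm_eq_abs, abs_rpow_neg_two v hv0,
      _root_.abs_of_pos (by positivity : (0:ℝ) < (v^2)⁻¹),
      one_mul, inv_eq_one_div, le_div_iff₀ (by positivity : (0:ℝ) < v^2)]
    nlinarith [h1, norm_nonneg (Gf k y z v)]

lemma fourier_Gf_isBigO (k : ℕ) (hk : 2 ≤ k) (y : ℝ) (z : ℂ) (hz : 0 < z.im) :
    (FourierTransform.fourier (Gf k y z)) =O[cocompact ℝ] (fun ξ : ℝ => |ξ| ^ (-2 : ℝ)) := by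
  have hπ : (1:ℝ) ≤ 2 * Real.pi := by nlinarith [Real.pi_gt_three]
  have key : ∀ ξ : ℝ, 2*‖z‖ + 2 ≤ |ξ| →
      ‖FourierTransform.fourier (Gf k y z) ξ‖ ≤ ((k-1).factorial * 4) * ‖|ξ| ^ (-2:ℝ)‖ := by
    intro ξ hξ
    have hz0 : (0:ℝ) ≤ ‖z‖ := norm_nonneg z
    have hξ0 : (0:ℝ) < |ξ| := by linarith
    set a := ‖(ξ:ℂ) - z‖ with ha
    have haξ : |ξ| - ‖z‖ ≤ a := by
      simpa using norm_sub_norm_le (ξ:ℂ) z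
    have ha1 : 1 ≤ a := by linarith
    have ha2 : |ξ|/2 ≤ a := by linarith
    have ha0 : 0 ≤ a := by linarith
    rw [fourier_Gf k hk y z hz ξ, norm_mul, norm_div]
    have h1 : ‖Complex.exp ((-2 * Real.pi * y * ξ : ℝ) * I)‖ = 1 := by
      rw [Complex.norm_exp_ofReal_mul_I]
    have h2 : ‖(2*(Real.pi:ℂ)*I*((ξ:ℂ) - z))^k‖ = (2*Real.pi*a)^k := by
      rw [norm_pow]
      congr 1
      simp only [norm_mul, Complex.norm_I, Complex.norm_two, Complex.norm_real, Real.norm_eq_abs,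
        _root_.abs_of_pos Real.pi_pos, ← ha]
      ring
    have h3 : ‖((k-1).factorial : ℂ)‖ = ((k-1).factorial : ℝ) := by
      simp
    rw [h1, h2, h3, one_mul]
    have hpow : |ξ|^2/4 ≤ (2*Real.pi*a)^k := by
      have e1 : (|ξ|/2)^2 ≤ a^2 := by
        apply pow_le_pow_left₀ (by positivity) ha2
      have e2 : a^2 ≤ a^k := pow_le_pow_right₀ ha1 hk
      have e3 : a^k ≤ (2*Real.pi*a)^k := by
        apply pow_le_pow_left₀ ha0
        nlinarith
      calc |ξ|^2/4 = (|ξ|/2)^2 := by ring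
        _ ≤ (2*Real.pi*a)^k := le_trans e1 (le_trans e2 e3)
    have hn : ‖|ξ| ^ (-2:ℝ)‖ = (|ξ|^2)⁻¹ := by
      rw [Real.norm_eq_abs]
      have : |ξ| ^ (-2:ℝ) = (|ξ|^2)⁻¹ := by
        rw [show (-2:ℝ) = -((2:ℕ):ℝ) by norm_num, Real.rpow_neg hξ0.le, Real.rpow_natCast]
      rw [this, _root_.abs_of_pos (by positivity)]
    rw [hn]
    calc ((k-1).factorial : ℝ) / (2*Real.pi*a)^k ≤ ((k-1).factorial : ℝ) / (|ξ|^2/4) := by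
          gcongr
      _ = ((k-1).factorial : ℝ) * 4 * (|ξ|^2)⁻¹ := by field_simp
  rw [cocompact_eq_atBot_atTop, isBigO_sup]
  constructor
  · apply IsBigO.of_bound (((k-1).factorial : ℝ) * 4)
    filter_upwards [eventually_le_atBot (-(2*‖z‖ + 2))] with ξ hξ
    exact key ξ (by linarith [neg_le_abs ξ])
  · apply IsBigO.of_bound (((k-1).factorial : ℝ) * 4)
    filter_upwards [eventually_ge_atTop (2*‖z‖ + 2)] with ξ hξ
    exact key ξ (by linarith [le_abs_self ξ])

end LipschitzAux

set_option maxHeartbeats 1000000 in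
open LipschitzAux MeasureTheory Set Filter Asymptotics in
/-- For an integer `k ≥ 2`, `x ∈ ℚ` and `z ∈ ℂ` with `Im z > 0`, the
series `∑_{n ∈ ℤ} e(nx)·(z+n)^{−k}` converges absolutely and equals
`((−2πi)^k/(k−1)!) · ∑_{r ∈ ℤ−x, r>0} r^{k−1}·e(rz)`, the right-hand sum ranging over all
positive real `r` with `r + x ∈ ℤ`. -/
theorem lipschitz_formula (k : ℕ) (hk : 2 ≤ k) (x : ℚ) (z : ℂ) (hz : 0 < z.im) :
    Summable (fun n : ℤ => eOf ((n : ℂ) * (x : ℂ)) * (z + (n : ℂ)) ^ (-(k : ℤ))) ∧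
    ∑' n : ℤ, eOf ((n : ℂ) * (x : ℂ)) * (z + (n : ℂ)) ^ (-(k : ℤ)) =
      ((-2 * (Real.pi : ℂ) * Complex.I) ^ k / (Nat.factorial (k - 1) : ℂ)) *
        ∑' r : {r : ℝ // 0 < r ∧ ∃ n : ℤ, r + (x : ℝ) = (n : ℝ)},
          ((r.1 : ℂ)) ^ (k - 1) * eOf ((r.1 : ℂ) * z) := by
  set y : ℝ := (x : ℝ) with hy
  set C : ℂ := ((-2 * (Real.pi : ℂ) * Complex.I) ^ k / (Nat.factorial (k - 1) : ℂ)) with hC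
  have hGc := Gf_cont k y z
  have hG := Gf_isBigO k hk y z hz
  have hFG := fourier_Gf_isBigO k hk y z hz
  have hsumF : Summable (fun n : ℤ => FourierTransform.fourier (Gf k y z) (n : ℝ)) :=
    summable_of_isBigO (Real.summable_abs_int_rpow one_lt_two)
      (hFG.comp_tendsto Int.tendsto_coe_cofinite)
  have poisson := Real.tsum_eq_tsum_fourier_of_rpow_decay hGc one_lt_two hG hFG 0
  simp only [zero_add] at poisson
  have hfour1 : ∀ n : ℤ, (fourier n ((0:ℝ) : UnitAddCircle) : ℂ) = 1 := by
    intro n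
    norm_cast
    exact fourier_eval_zero n
  simp only [hfour1, mul_one] at poisson
  -- term identity
  have hfac : ((Nat.factorial (k-1) : ℂ)) ≠ 0 := by
    exact_mod_cast (Nat.factorial_pos (k-1)).ne'
  have hm2pi : ((-2 : ℂ) * (Real.pi : ℂ) * Complex.I) ≠ 0 := by
    simp [Real.pi_ne_zero, Complex.I_ne_zero]
  have hterm : ∀ n : ℤ, eOf ((n : ℂ) * (x : ℂ)) * (z + (n : ℂ)) ^ (-(k : ℤ))
      = C * FourierTransform.fourier (Gf k y z) (-(n:ℝ)) := by
    intro n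
    have hzn : (z + (n : ℂ)) ≠ 0 := by
      intro h
      have := congrArg Complex.im h
      simp at this
      linarith
    rw [fourier_Gf k hk y z hz (-(n:ℝ))]
    have h2 : (2*(Real.pi:ℂ)*I*(((-(n:ℝ)):ℝ) - z))^k = (-2*(Real.pi:ℂ)*I)^k * (z + (n:ℂ))^k := by
      rw [← mul_pow]
      congr 1
      push_cast
      ring
    rw [h2]
    have harg : (((-2 * Real.pi * y * (-(n:ℝ)) : ℝ)) : ℂ) * I
        = 2 * (Real.pi:ℂ) * Complex.I * ((n : ℂ) * (x : ℂ)) := by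
      rw [hy]
      push_cast
      ring
    rw [harg]
    rw [zpow_neg, zpow_natCast]
    unfold eOf
    have hpz : (z + (n:ℂ))^k ≠ 0 := pow_ne_zero _ hzn
    have hp2 : ((-2:ℂ) * (Real.pi:ℂ) * Complex.I)^k ≠ 0 := pow_ne_zero _ hm2pi
    set P : ℂ := ((-2:ℂ) * (Real.pi:ℂ) * Complex.I)^k with hP
    set Q : ℂ := (z + (n:ℂ))^k with hQ
    have key : C * (((k-1).factorial : ℂ) / (P * Q)) = Q⁻¹ := by
      rw [hC, div_mul_div_comm,
        show ((Nat.factorial (k-1) : ℂ)) * (P * Q) = (P * ((Nat.factorial (k-1) : ℂ))) * Q by ring,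
        ← div_div, div_self (mul_ne_zero hp2 hfac), one_div]
    calc Complex.exp (2*(Real.pi:ℂ)*Complex.I*((n:ℂ)*(x:ℂ))) * Q⁻¹
        = Complex.exp (2*(Real.pi:ℂ)*Complex.I*((n:ℂ)*(x:ℂ)))
            * (C * (((k-1).factorial : ℂ) / (P * Q))) := by rw [key]
      _ = C * (Complex.exp (2*(Real.pi:ℂ)*Complex.I*((n:ℂ)*(x:ℂ)))
            * (((k-1).factorial : ℂ) / (P * Q))) := by ring
  -- summability
  have hsumNeg : Summable (fun n : ℤ => FourierTransform.fourier (Gf k y z) (-(n:ℝ))) := by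
    have h := (Equiv.neg ℤ).summable_iff.mpr hsumF
    exact h.congr (fun n => by simp)
  have hsumL : Summable (fun n : ℤ => eOf ((n : ℂ) * (x : ℂ)) * (z + (n : ℂ)) ^ (-(k : ℤ))) := by
    rw [summable_congr hterm]
    exact hsumNeg.mul_left C
  refine ⟨hsumL, ?_⟩
  have hneg : (∑' n : ℤ, FourierTransform.fourier (Gf k y z) (-(n:ℝ)))
      = ∑' n : ℤ, FourierTransform.fourier (Gf k y z) (n:ℝ) := by
    have h := (Equiv.neg ℤ).tsum_eq (fun n : ℤ => FourierTransform.fourier (Gf k y z) (n:ℝ))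
    simpa [Equiv.neg_apply] using h
  -- reindexing the G-sum
  have hreindex : (∑' n : ℤ, Gf k y z (n:ℝ))
      = ∑' r : {r : ℝ // 0 < r ∧ ∃ n : ℤ, r + (x : ℝ) = (n : ℝ)},
          ((r.1 : ℂ)) ^ (k - 1) * eOf ((r.1 : ℂ) * z) := by
    apply tsum_eq_tsum_of_ne_zero_bij
      (i := fun rp => (rp.1.2.2).choose)
    · intro r1 r2 h
      simp only [] at h
      have e1 := (r1.1.2.2).choose_spec
      have e2 := (r2.1.2.2).choose_spec
      have hcast := congrArg (fun m : ℤ => (m : ℝ)) h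
      have hval := add_right_cancel (e1.trans (hcast.trans e2.symm))
      apply Subtype.ext
      apply Subtype.ext
      exact hval
    · intro n hn
      simp only [Function.mem_support] at hn
      have hpos : 0 < (n:ℝ) - y := by
        by_contra hle
        push_neg at hle
        apply hn
        unfold Gf
        rw [max_eq_right hle]
        simp [zero_pow (by omega : k - 1 ≠ 0)]
      have hex : ∃ m : ℤ, ((n:ℝ) - y) + (x:ℝ) = (m:ℝ) := ⟨n, by rw [hy]; ring⟩
      have hgne : (((((n:ℝ) - y) : ℝ) : ℂ)) ^ (k-1) * eOf (((((n:ℝ) - y) : ℝ) : ℂ) * z) ≠ 0 := by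
        apply mul_ne_zero
        · apply pow_ne_zero
          exact_mod_cast hpos.ne'
        · exact Complex.exp_ne_zero _
      refine ⟨⟨⟨(n:ℝ) - y, hpos, hex⟩, hgne⟩, ?_⟩
      have hspec := hex.choose_spec
      have : ((hex.choose : ℤ) : ℝ) = (n : ℝ) := by
        rw [← hspec, hy]; ring
      exact_mod_cast this
    · intro rp
      have hspec := (rp.1.2.2).choose_spec
      have hr0 : (0:ℝ) < rp.1.1 := rp.1.2.1
      have hmax : max (((rp.1.2.2).choose : ℝ) - y) 0 = rp.1.1 := by
        rw [hy, ← hspec]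
        rw [max_eq_left (by linarith)]
        ring
      unfold Gf
      rw [hmax]
      unfold eOf
      congr 1
      ring
  -- conclusion
  calc ∑' n : ℤ, eOf ((n : ℂ) * (x : ℂ)) * (z + (n : ℂ)) ^ (-(k : ℤ))
      = ∑' n : ℤ, C * FourierTransform.fourier (Gf k y z) (-(n:ℝ)) := tsum_congr hterm
    _ = C * ∑' n : ℤ, FourierTransform.fourier (Gf k y z) (-(n:ℝ)) := tsum_mul_left
    _ = C * ∑' n : ℤ, FourierTransform.fourier (Gf k y z) (n:ℝ) := by rw [hneg]
    _ = C * ∑' n : ℤ, Gf k y z (n:ℝ) := by rw [← poisson]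
    _ = _ := by rw [hreindex]
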